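/- A finite-number-conserving one-dimensional cellular automaton F is surjective (as a map on all configurations ℤ → Fin q) if and only if its restriction to the set C_F of finite configurations is a bijection of C_F onto C_F (i.e. Set.BijOn F C_F C_F). -/

import Mathlib

open Filter Topology
open scoped Classical

/-- Global map of a one-dimensional CA of radius `l` with local rule `f`. -/
def glob (q l : ℕ) (f : (Fin (2*l+1) → Fin q) → Fin q) :
    (ℤ → Fin q) → (ℤ → Fin q) :=
  fun c i => f (fun j => c (i + (j : ℤ) - l))

/-- The set of finite configurations. -/
def CF (q : ℕ) [NeZero q] : Set (ℤ → Fin q) :=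
  {c | {i : ℤ | c i ≠ 0}.Finite}

/-- Sum of the states of a configuration (sum over its support). -/
noncomputable def sVal (q : ℕ) [NeZero q] (c : ℤ → Fin q) : ℕ :=
  ∑ᶠ i : ℤ, (c i : ℕ)

/-- Finite-number-conserving: `0` is quiescent and `s (F c) = s c` for finite `c`. -/
def FNC (q l : ℕ) [NeZero q] (f : (Fin (2*l+1) → Fin q) → Fin q) : Prop :=
  f (fun _ => 0) = 0 ∧ ∀ c ∈ CF q, sVal q (glob q l f c) = sVal q c

set_option linter.unusedSectionVars false

section Aux
variable (q l : ℕ) [NeZero q] (f : (Fin (2*l+1) → Fin q) → Fin q)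

lemma glob_local {c d : ℤ → Fin q} {i : ℤ}
    (h : ∀ j : ℤ, i - l ≤ j → j ≤ i + l → c j = d j) :
    glob q l f c i = glob q l f d i := by
  unfold glob
  congr 1
  funext j
  have hj : (j : ℕ) < 2*l+1 := j.isLt
  apply h <;> omega

lemma glob_zero (h0 : f (fun _ => 0) = 0) {c : ℤ → Fin q} {i : ℤ}
    (h : ∀ j : ℤ, i - l ≤ j → j ≤ i + l → c j = 0) :
    glob q l f c i = 0 := by
  have h1 : glob q l f c i = glob q l f (fun _ => 0) i :=
    glob_local q l f h
  rw [h1]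
  exact h0

lemma sVal_eq_sum {c : ℤ → Fin q} (T : Finset ℤ) (h : ∀ i, c i ≠ 0 → i ∈ T) :
    sVal q c = ∑ i ∈ T, (c i : ℕ) := by
  apply finsum_eq_sum_of_support_subset
  intro i hi
  simp only [Function.mem_support] at hi
  exact h i (fun h' => hi (by simp [h']))

lemma sum_le_sVal {c : ℤ → Fin q} (hc : c ∈ CF q) (T : Finset ℤ) :
    ∑ i ∈ T, (c i : ℕ) ≤ sVal q c := by
  have hfin : {i : ℤ | c i ≠ 0}.Finite := hc
  rw [sVal_eq_sum q (T := T ∪ hfin.toFinset) (by intro i hi; simp [hi])]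
  exact Finset.sum_le_sum_of_subset (Finset.subset_union_left)

noncomputable def trunc (c : ℤ → Fin q) (a b : ℤ) : ℤ → Fin q :=
  fun i => if i ∈ Finset.Icc a b then c i else 0

lemma trunc_mem_CF (c : ℤ → Fin q) (a b : ℤ) : trunc q c a b ∈ CF q := by
  apply Set.Finite.subset (Finset.Icc a b).finite_toSet
  intro i hi
  by_contra hmem
  exact hi (by simp [trunc, Finset.mem_coe.mp, (by simpa using hmem : i ∉ Finset.Icc a b)])


lemma val_ne_zero {q : ℕ} [NeZero q] {x : Fin q} (h : x ≠ 0) : (x:ℕ) ≠ 0 :=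
  fun h' => h (Fin.ext (by simp [h']))

lemma mapsTo_CF (h0 : f (fun _ => 0) = 0) : Set.MapsTo (glob q l f) (CF q) (CF q) := by
  intro c hc
  have hsub : {i : ℤ | glob q l f c i ≠ 0} ⊆ ⋃ j ∈ {i : ℤ | c i ≠ 0}, Set.Icc (j - l) (j + l) := by
    intro i hi
    by_contra hmem
    apply hi
    apply glob_zero q l f h0
    intro j hj1 hj2
    by_contra hcj
    exact hmem (Set.mem_biUnion hcj ⟨by omega, by omega⟩)
  exact (Set.Finite.biUnion hc (fun j _ => Set.finite_Icc _ _)).subset hsub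

lemma preimage_finite (hF : FNC q l f) {c e : ℤ → Fin q}
    (hce : glob q l f c = e) (he : e ∈ CF q) : c ∈ CF q := by
  set K := sVal q e + 4*l*(q-1) with hK
  have bound : ∀ N : ℤ, (l:ℤ) ≤ N → ∑ i ∈ Finset.Icc (-N) N, (c i : ℕ) ≤ K := by
    intro N hN
    set cN := trunc q c (-N) N with hcN
    have hcNC : cN ∈ CF q := trunc_mem_CF q c (-N) N
    have h1 : ∑ i ∈ Finset.Icc (-N) N, (c i : ℕ) = sVal q cN := by
      rw [sVal_eq_sum q (c := cN) (T := Finset.Icc (-N) N)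
        (by intro i hi; by_contra hm; exact hi (by simp [hcN, trunc, hm]))]
      apply Finset.sum_congr rfl
      intro i hi
      simp [hcN, trunc, hi]
    have h2 : sVal q cN = sVal q (glob q l f cN) := (hF.2 cN hcNC).symm
    have h3 : sVal q (glob q l f cN) =
        ∑ i ∈ Finset.Icc (-N - l) (N + l), ((glob q l f cN i : ℕ)) := by
      apply sVal_eq_sum
      intro i hi
      by_contra hmem
      apply hi
      apply glob_zero q l f hF.1
      intro j hj1 hj2
      have hj : j ∉ Finset.Icc (-N) N := by
        simp only [Finset.mem_Icc] at hmem ⊢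
        omega
      simp [hcN, trunc, hj]
    have hsub : Finset.Icc (-N + l) (N - l) ⊆ Finset.Icc (-N - l : ℤ) (N + l) := by
      intro i hi
      simp only [Finset.mem_Icc] at hi ⊢
      omega
    rw [← Finset.sum_sdiff hsub] at h3
    have hmid : ∑ i ∈ Finset.Icc (-N + l) (N - l), ((glob q l f cN i : ℕ)) ≤ sVal q e := by
      have heq : ∀ i ∈ Finset.Icc (-N + l) (N - l), glob q l f cN i = e i := by
        intro i hi
        rw [← hce]
        apply glob_local
        intro j hj1 hj2
        simp only [Finset.mem_Icc] at hi
        have hj : j ∈ Finset.Icc (-N) N := by simp only [Finset.mem_Icc]; omega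
        simp [hcN, trunc, hj]
      rw [Finset.sum_congr rfl (fun i hi => by rw [heq i hi])]
      exact sum_le_sVal q he _
    have hbd : ∑ i ∈ (Finset.Icc (-N - l : ℤ) (N + l)) \ (Finset.Icc (-N + l) (N - l)),
        ((glob q l f cN i : ℕ)) ≤ 4*l*(q-1) := by
      have hcard : ((Finset.Icc (-N - l : ℤ) (N + l)) \ (Finset.Icc (-N + l) (N - l))).card = 4*l := by
        rw [Finset.card_sdiff_of_subset hsub, Int.card_Icc, Int.card_Icc]
        omega
      calc ∑ i ∈ (Finset.Icc (-N - l : ℤ) (N + l)) \ (Finset.Icc (-N + l) (N - l)),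
            ((glob q l f cN i : ℕ))
          ≤ ((Finset.Icc (-N - l : ℤ) (N + l)) \ (Finset.Icc (-N + l) (N - l))).card • (q-1) := by
            apply Finset.sum_le_card_nsmul
            intro i _
            have := (glob q l f cN i).isLt
            omega
        _ = 4*l*(q-1) := by rw [hcard, smul_eq_mul]
    omega
  by_contra hc
  have hinf : {i : ℤ | c i ≠ 0}.Infinite := hc
  obtain ⟨t, hts, htcard⟩ := hinf.exists_subset_card_eq (K + 1)
  set N : ℤ := l + ∑ i ∈ t, |i| with hNdef
  have hN : (l:ℤ) ≤ N := by
    have : (0:ℤ) ≤ ∑ i ∈ t, |i| := Finset.sum_nonneg (fun i _ => abs_nonneg i)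
    omega
  have htsub : t ⊆ Finset.Icc (-N) N := by
    intro i hi
    have h1 : |i| ≤ ∑ j ∈ t, |j| :=
      Finset.single_le_sum (fun j _ => abs_nonneg j) hi
    have h3 := le_abs_self i
    have h4 := neg_abs_le i
    simp only [Finset.mem_Icc]
    omega
  have hlow : K + 1 ≤ ∑ i ∈ Finset.Icc (-N) N, (c i : ℕ) := by
    calc K + 1 = t.card := htcard.symm
      _ = t.card • 1 := by simp
      _ ≤ ∑ i ∈ t, (c i : ℕ) := by
          apply Finset.card_nsmul_le_sum
          intro i hi
          have h5 : (c i : ℕ) ≠ 0 := val_ne_zero (hts hi)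
          omega
      _ ≤ ∑ i ∈ Finset.Icc (-N) N, (c i : ℕ) := Finset.sum_le_sum_of_subset htsub
  have := bound N hN
  omega

end Aux

noncomputable def Rmap (q : ℕ) [NeZero q] (L N : ℕ) (U V : ℤ → Fin q)
    (c : ℤ → Fin q) : ℤ → Fin q :=
  fun i => if 0 ≤ i ∧ i < (N:ℤ) ∧ (∀ x : ℤ, 0 ≤ x → x < (L:ℤ) → c ((i / (L:ℤ)) * L + x) = U x)
           then V (i % (L:ℤ)) else c i

lemma Rmap_outside {q : ℕ} [NeZero q] {L N : ℕ} (U V : ℤ → Fin q)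
    (c : ℤ → Fin q) {i : ℤ} (hi : i < 0 ∨ (N:ℤ) ≤ i) :
    Rmap q L N U V c i = c i := by
  unfold Rmap
  rw [if_neg]
  rintro ⟨h1, h2, -⟩
  omega

lemma Rmap_eval {q : ℕ} [NeZero q] {L N : ℕ} (U V : ℤ → Fin q) (c : ℤ → Fin q)
    {t x : ℤ} (ht0 : 0 ≤ t) (hx0 : 0 ≤ x) (hxL : x < (L:ℤ)) (htN : (t+1)*(L:ℤ) ≤ (N:ℤ)) :
    Rmap q L N U V c (t*(L:ℤ) + x) =
      if (∀ y : ℤ, 0 ≤ y → y < (L:ℤ) → c (t*(L:ℤ) + y) = U y) then V x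
      else c (t*(L:ℤ) + x) := by
  have hL : (0:ℤ) < L := by omega
  have hdiv : (t*(L:ℤ) + x) / L = t := by
    rw [add_comm, Int.add_mul_ediv_right _ _ (ne_of_gt hL),
      Int.ediv_eq_zero_of_lt hx0 hxL, zero_add]
  have hmod : (t*(L:ℤ) + x) % L = x := by
    rw [add_comm, mul_comm, Int.add_mul_emod_self_left, Int.emod_eq_of_lt hx0 hxL]
  have hi0 : 0 ≤ t*(L:ℤ) + x := by positivity
  have hiN : t*(L:ℤ) + x < N := by nlinarith
  unfold Rmap
  by_cases hP : ∀ y : ℤ, 0 ≤ y → y < (L:ℤ) → c (t*(L:ℤ) + y) = U y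
  · rw [if_pos ⟨hi0, hiN, by rw [hdiv]; exact hP⟩, if_pos hP, hmod]
  · rw [if_neg, if_neg hP]
    rintro ⟨-, -, hP'⟩
    rw [hdiv] at hP'
    exact hP hP'

lemma glob_local' {q l : ℕ} [NeZero q] (f : (Fin (2*l+1) → Fin q) → Fin q)
    {c d : ℤ → Fin q} {i : ℤ}
    (h : ∀ j : ℤ, i - l ≤ j → j ≤ i + l → c j = d j) :
    glob q l f c i = glob q l f d i := by
  unfold glob
  congr 1
  funext j
  have hj : (j : ℕ) < 2*l+1 := j.isLt
  apply h <;> omega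

lemma Rmap_blockne {q L N k : ℕ} [NeZero q] (hNkL : N = k*L)
    (U V : ℤ → Fin q)
    (huv : ∃ x : ℤ, 0 ≤ x ∧ x < (L:ℤ) ∧ U x ≠ V x)
    (c : ℤ → Fin q) (t : Fin k) :
    (fun s : Fin L => Rmap q L N U V c (((t:ℕ):ℤ)*L + ((s:ℕ):ℤ)))
      ≠ (fun s : Fin L => U ((s:ℕ):ℤ)) := by
  intro heq
  have htN : (((t:ℕ):ℤ)+1)*(L:ℤ) ≤ (N:ℤ) := by
    have ht := t.isLt
    have h1 : ((t:ℕ):ℤ) + 1 ≤ (k:ℤ) := by omega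
    have h2 : (((t:ℕ):ℤ)+1)*(L:ℤ) ≤ (k:ℤ)*(L:ℤ) :=
      mul_le_mul_of_nonneg_right h1 (by positivity)
    have h3 : (N:ℤ) = (k:ℤ)*(L:ℤ) := by rw [hNkL]; push_cast; ring
    rw [h3]; exact h2
  have hL0 : 0 < L := by
    rcases huv with ⟨x, hx0, hxL, -⟩
    omega
  by_cases hP : ∀ y : ℤ, 0 ≤ y → y < (L:ℤ) → c (((t:ℕ):ℤ)*(L:ℤ) + y) = U y
  · obtain ⟨x, hx0, hxL, hxne⟩ := huv
    apply hxne
    have h1 := congrFun heq ⟨x.toNat, by omega⟩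
    simp only at h1
    have hco : (((⟨x.toNat, by omega⟩ : Fin L) : ℕ) : ℤ) = x := by
      simp [Int.toNat_of_nonneg hx0]
    rw [hco] at h1
    rw [Rmap_eval U V c (by positivity) hx0 hxL htN, if_pos hP] at h1
    rw [← h1]
  · apply hP
    intro y hy0 hyL
    have h1 := congrFun heq ⟨y.toNat, by omega⟩
    simp only at h1
    have hco : (((⟨y.toNat, by omega⟩ : Fin L) : ℕ) : ℤ) = y := by
      simp [Int.toNat_of_nonneg hy0]
    rw [hco] at h1
    rw [Rmap_eval U V c (by positivity) hy0 hyL htN, if_neg hP] at h1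
    exact h1

lemma Rmap_glob_inv {q l L N k : ℕ} [NeZero q] (f : (Fin (2*l+1) → Fin q) → Fin q)
    (hNkL : N = k*L) (hL : 4*l+1 ≤ L)
    (U V : ℤ → Fin q)
    (hUVmargin : ∀ x : ℤ, 0 ≤ x → x < (L:ℤ) → (x < 2*(l:ℤ) ∨ (L:ℤ) - 2*l ≤ x) → U x = V x)
    (hUVim : ∀ p : ℤ, f (fun j => U (p + (j:ℤ))) = f (fun j => V (p + (j:ℤ))))
    (x : ℤ → Fin q) (p : ℤ) :
    glob q l f (Rmap q L N U V x) (p + l) = glob q l f x (p + l) := by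
  by_cases hsame : ∀ z : ℤ, p ≤ z → z ≤ p + 2*l → Rmap q L N U V x z = x z
  · apply glob_local' f
    intro j hj1 hj2
    apply hsame <;> omega
  · push_neg at hsame
    obtain ⟨z, hz1, hz2, hzne⟩ := hsame
    have hLpos : (0:ℤ) < L := by omega
    have hz0 : 0 ≤ z ∧ z < (N:ℤ) := by
      by_contra hcon
      exact hzne (Rmap_outside U V x (by omega))
    set t := z / (L:ℤ) with ht
    set ρ := z % (L:ℤ) with hρ
    have hρ0 : 0 ≤ ρ := Int.emod_nonneg z (ne_of_gt hLpos)
    have hρL : ρ < L := Int.emod_lt_of_pos z hLpos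
    have hzdecomp : z = t * L + ρ := by
      rw [ht, hρ, mul_comm]
      exact (Int.mul_ediv_add_emod z L).symm
    have ht0 : 0 ≤ t := Int.ediv_nonneg hz0.1 hLpos.le
    have hNcast : (N:ℤ) = (k:ℤ)*(L:ℤ) := by rw [hNkL]; push_cast; ring
    have htk : t < (k:ℤ) := by
      by_contra hcon
      push_neg at hcon
      have h2 : (k:ℤ)*(L:ℤ) ≤ t*(L:ℤ) := mul_le_mul_of_nonneg_right hcon hLpos.le
      have := hz0.2
      rw [hNcast] at this
      linarith [hzdecomp]
    have htN : (t+1)*(L:ℤ) ≤ (N:ℤ) := by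
      have h2 : (t+1)*(L:ℤ) ≤ (k:ℤ)*(L:ℤ) :=
        mul_le_mul_of_nonneg_right (by omega) hLpos.le
      rw [hNcast]; exact h2
    have hz' := hzne
    rw [hzdecomp, Rmap_eval U V x ht0 hρ0 hρL htN] at hz'
    by_cases hP : ∀ y : ℤ, 0 ≤ y → y < (L:ℤ) → x (t*(L:ℤ) + y) = U y
    swap
    · rw [if_neg hP] at hz'
      exact absurd rfl hz'
    rw [if_pos hP] at hz'
    have hUρ : x (t*(L:ℤ) + ρ) = U ρ := hP ρ hρ0 hρL
    have hUVρ : U ρ ≠ V ρ := by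
      intro h
      apply hz'
      rw [← h, ← hUρ]
    have hinterior : 2*(l:ℤ) ≤ ρ ∧ ρ < (L:ℤ) - 2*l := by
      by_contra hcase
      exact hUVρ (hUVmargin ρ hρ0 hρL (by omega))
    have hwin : ∀ w : ℤ, p ≤ w → w ≤ p + 2*l → (t*(L:ℤ) ≤ w ∧ w < t*(L:ℤ) + L) := by
      intro w h1 h2
      constructor <;> linarith [hzdecomp, hinterior.1, hinterior.2]
    have e1 : glob q l f x (p + l) = f (fun j => U ((p - t*(L:ℤ)) + (j:ℤ))) := by
      unfold glob
      congr 1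
      funext j
      have hj : (j:ℕ) < 2*l+1 := j.isLt
      have hw := hwin (p + (j:ℤ)) (by omega) (by omega)
      have harg : p + (l:ℤ) + (j:ℤ) - l = t*(L:ℤ) + (p + (j:ℤ) - t*(L:ℤ)) := by ring
      rw [harg, hP (p + (j:ℤ) - t*(L:ℤ)) (by linarith [hw.1]) (by linarith [hw.2])]
      congr 1
      ring
    have e2 : glob q l f (Rmap q L N U V x) (p + l)
        = f (fun j => V ((p - t*(L:ℤ)) + (j:ℤ))) := by
      unfold glob
      congr 1
      funext j
      have hj : (j:ℕ) < 2*l+1 := j.isLt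
      have hw := hwin (p + (j:ℤ)) (by omega) (by omega)
      have harg : p + (l:ℤ) + (j:ℤ) - l = t*(L:ℤ) + (p + (j:ℤ) - t*(L:ℤ)) := by ring
      rw [harg, Rmap_eval U V x ht0 (by linarith [hw.1]) (by linarith [hw.2]) htN,
        if_pos hP]
      congr 1
      ring
    rw [e1, e2, hUVim]

lemma pow_aux (a : ℕ) : ∀ n : ℕ, a^n + n * a^(n-1) ≤ (a+1)^n := by
  intro n
  induction n with
  | zero => simp
  | succ n ih =>
    rcases Nat.eq_zero_or_pos n with h|h
    · subst h; simp
    · have hpow : a^(n-1) * a = a^n := by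
        rw [← pow_succ]
        congr 1
        omega
      have key : (a^n + n * a^(n-1)) * (a+1) ≤ (a+1)^n * (a+1) :=
        Nat.mul_le_mul_right _ ih
      have expand : (a^n + n*a^(n-1)) * (a+1)
          = a^n*a + a^n + n*(a^(n-1)*a) + n*a^(n-1) := by ring
      rw [expand, hpow, ← pow_succ, ← pow_succ] at key
      have hgoal : (n+1)*a^(n+1-1) = n*a^n + a^n := by
        rw [Nat.add_sub_cancel]
        ring
      rw [hgoal]
      calc a^(n+1) + (n*a^n + a^n) = a^(n+1) + a^n + n*a^n := by ring
        _ ≤ a^(n+1) + a^n + n*a^n + n*a^(n-1) := Nat.le_add_right _ _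
        _ ≤ (a+1)^(n+1) := key

lemma injOn_CF (q l : ℕ) [NeZero q] (hq : 2 ≤ q)
    (f : (Fin (2*l+1) → Fin q) → Fin q)
    (hsurj : Function.Surjective (glob q l f)) :
    Set.InjOn (glob q l f) (CF q) := by
  intro c hc d hd hcd
  by_contra hne
  obtain ⟨m, hm⟩ : ∃ m : ℕ, ∀ i : ℤ, m < i.natAbs → c i = 0 ∧ d i = 0 := by
    refine ⟨(hc.toFinset ∪ hd.toFinset).sup Int.natAbs, fun i hi => ?_⟩
    constructor <;> by_contra hcon
    · have hmem : i ∈ hc.toFinset ∪ hd.toFinset := by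
        rw [Finset.mem_union]
        exact Or.inl ((Set.Finite.mem_toFinset (s := {i | c i ≠ 0}) (hs := hc)).mpr hcon)
      have := Finset.le_sup (f := Int.natAbs) hmem
      omega
    · have hmem : i ∈ hc.toFinset ∪ hd.toFinset := by
        rw [Finset.mem_union]
        exact Or.inr ((Set.Finite.mem_toFinset (s := {i | d i ≠ 0}) (hs := hd)).mpr hcon)
      have := Finset.le_sup (f := Int.natAbs) hmem
      omega
  set L := 2*m + 4*l + 1 with hLdef
  have hL : 4*l+1 ≤ L := by omega
  set U : ℤ → Fin q := fun x => c (x - ((m:ℤ) + 2*l)) with hU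
  set V : ℤ → Fin q := fun x => d (x - ((m:ℤ) + 2*l)) with hV
  have hLcast : (L:ℤ) = 2*(m:ℤ) + 4*l + 1 := by rw [hLdef]; push_cast; ring
  have huv : ∃ x : ℤ, 0 ≤ x ∧ x < (L:ℤ) ∧ U x ≠ V x := by
    obtain ⟨i, hi⟩ := Function.ne_iff.mp hne
    have him : i.natAbs ≤ m := by
      by_contra hcon
      push_neg at hcon
      obtain ⟨h1, h2⟩ := hm i hcon
      exact hi (h1.trans h2.symm)
    refine ⟨i + ((m:ℤ) + 2*l), by omega, by omega, ?_⟩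
    have harg : i + ((m:ℤ) + 2*l) - ((m:ℤ) + 2*l) = i := by ring
    simp only [hU, hV]
    simpa [harg] using hi
  have hUVmargin : ∀ x : ℤ, 0 ≤ x → x < (L:ℤ) → (x < 2*(l:ℤ) ∨ (L:ℤ) - 2*l ≤ x) → U x = V x := by
    intro x hx0 hxL hcase
    have hna : m < (x - ((m:ℤ) + 2*l)).natAbs := by omega
    simp only [hU, hV]
    rw [(hm _ hna).1, (hm _ hna).2]
  have hUVim : ∀ p : ℤ, f (fun j => U (p + (j:ℤ))) = f (fun j => V (p + (j:ℤ))) := by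
    intro p
    have h1 : f (fun j => U (p + (j:ℤ))) = glob q l f c (p - ((m:ℤ) + 2*l) + l) := by
      unfold glob
      congr 1
      funext j
      simp only [hU]
      congr 1
      ring
    have h2 : f (fun j => V (p + (j:ℤ))) = glob q l f d (p - ((m:ℤ) + 2*l) + l) := by
      unfold glob
      congr 1
      funext j
      simp only [hV]
      congr 1
      ring
    rw [h1, h2, hcd]
  -- numerics
  set a := q^L - 1 with hadef
  have hqL : 2 ≤ q^L := by
    calc 2 ≤ q := hq
      _ = q^1 := (pow_one q).symm
      _ ≤ q^L := Nat.pow_le_pow_right (by omega) (by omega)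
  have ha1 : 1 ≤ a := by omega
  set k := q^(2*l) * a with hkdef
  have hk1 : 1 ≤ k := Nat.one_le_iff_ne_zero.mpr (by
    have h1 : 0 < q^(2*l) := Nat.pow_pos (by omega)
    positivity)
  set N := k * L with hNkL
  have hLN : L ≤ N := Nat.le_mul_of_pos_left L hk1
  set D := N - 2*l with hDdef
  have hND : N = D + 2*l := by omega
  have hNcast : (N:ℤ) = (k:ℤ)*(L:ℤ) := by rw [hNkL]; push_cast; ring
  have hL0 : (0:ℤ) < L := by omega
  -- section of glob on words
  have hsec : ∀ e : Fin D → Fin q, ∃ x : ℤ → Fin q,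
      (∀ i : ℤ, i < 0 ∨ (N:ℤ) ≤ i → x i = 0) ∧
      ∀ p : Fin D, glob q l f x (((p:ℕ):ℤ) + l) = e p := by
    intro e
    obtain ⟨c₀, hc₀⟩ := hsurj (fun i : ℤ =>
      if h : (l:ℤ) ≤ i ∧ i < (l:ℤ) + D then e ⟨(i - l).toNat, by omega⟩ else 0)
    refine ⟨fun i => if 0 ≤ i ∧ i < (N:ℤ) then c₀ i else 0, ?_, ?_⟩
    · intro i hi
      show (if 0 ≤ i ∧ i < (N:ℤ) then c₀ i else 0) = 0
      rw [if_neg (by omega)]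
    · intro p
      have hp := p.isLt
      have h1 : glob q l f (fun i => if 0 ≤ i ∧ i < (N:ℤ) then c₀ i else 0) (((p:ℕ):ℤ)+l)
          = glob q l f c₀ (((p:ℕ):ℤ)+l) := by
        apply glob_local' f
        intro j hj1 hj2
        show (if 0 ≤ j ∧ j < (N:ℤ) then c₀ j else 0) = c₀ j
        rw [if_pos (by omega)]
      rw [h1, congrFun hc₀ (((p:ℕ):ℤ)+l), dif_pos ⟨by omega, by omega⟩]
      congr 1
      apply Fin.ext
      simp
  choose σ hσ0 hσΨ using hsec
  have hRinv : ∀ e : Fin D → Fin q, ∀ p : Fin D,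
      glob q l f (Rmap q L N U V (σ e)) (((p:ℕ):ℤ) + l) = e p := by
    intro e p
    rw [Rmap_glob_inv f hNkL hL U V hUVmargin hUVim (σ e) ((p:ℕ):ℤ)]
    exact hσΨ e p
  set J : (Fin D → Fin q) → (Fin k → {y : Fin L → Fin q // y ≠ fun s : Fin L => U ((s:ℕ):ℤ)}) :=
    fun e t => ⟨fun s => Rmap q L N U V (σ e) (((t:ℕ):ℤ)*L + ((s:ℕ):ℤ)),
      Rmap_blockne hNkL U V huv (σ e) t⟩ with hJ
  have hJinj : Function.Injective J := by
    intro e e' h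
    have hRR : Rmap q L N U V (σ e) = Rmap q L N U V (σ e') := by
      funext i
      by_cases hi : 0 ≤ i ∧ i < (N:ℤ)
      · set tt := (i / (L:ℤ)).toNat with htt
        set ss := (i % (L:ℤ)).toNat with hss
        have hmodpos : 0 ≤ i % (L:ℤ) := Int.emod_nonneg i (ne_of_gt hL0)
        have hmodlt : i % (L:ℤ) < L := Int.emod_lt_of_pos i hL0
        have hdivpos : 0 ≤ i / (L:ℤ) := Int.ediv_nonneg hi.1 hL0.le
        have h1 : ((tt:ℕ):ℤ) = i / L := by rw [htt]; exact Int.toNat_of_nonneg hdivpos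
        have h2 : ((ss:ℕ):ℤ) = i % L := by rw [hss]; exact Int.toNat_of_nonneg hmodpos
        have hsL : ss < L := by omega
        have hdecomp := Int.mul_ediv_add_emod i (L:ℤ)
        have htk : tt < k := by
          by_contra hcon
          push_neg at hcon
          have hc1 : (k:ℤ) ≤ ((tt:ℕ):ℤ) := by exact_mod_cast hcon
          have hc2 : (k:ℤ)*(L:ℤ) ≤ ((tt:ℕ):ℤ)*(L:ℤ) :=
            mul_le_mul_of_nonneg_right hc1 hL0.le
          rw [h1] at hc2
          have := hi.2
          rw [hNcast] at this
          nlinarith [hmodpos]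
        have hco : (((⟨tt, htk⟩ : Fin k) : ℕ) : ℤ) * L + (((⟨ss, hsL⟩ : Fin L) : ℕ) : ℤ) = i := by
          show ((tt:ℕ):ℤ) * L + ((ss:ℕ):ℤ) = i
          rw [h1, h2, mul_comm]
          exact Int.mul_ediv_add_emod i L
        have hcomp := congrFun (congrArg Subtype.val (congrFun h ⟨tt, htk⟩)) ⟨ss, hsL⟩
        simp only [hJ] at hcomp
        rw [← hco]
        exact hcomp
      · push_neg at hi
        by_cases hi0 : 0 ≤ i
        · rw [Rmap_outside U V _ (Or.inr (hi hi0)), Rmap_outside U V _ (Or.inr (hi hi0)),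
            hσ0 e i (Or.inr (hi hi0)), hσ0 e' i (Or.inr (hi hi0))]
        · push_neg at hi0
          rw [Rmap_outside U V _ (Or.inl hi0), Rmap_outside U V _ (Or.inl hi0),
            hσ0 e i (Or.inl hi0), hσ0 e' i (Or.inl hi0)]
    funext p
    calc e p = glob q l f (Rmap q L N U V (σ e)) (((p:ℕ):ℤ) + l) := (hRinv e p).symm
      _ = glob q l f (Rmap q L N U V (σ e')) (((p:ℕ):ℤ) + l) := by rw [hRR]
      _ = e' p := hRinv e' p
  -- counting
  have hcard := Fintype.card_le_of_injective J hJinj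
  have hc1 : Fintype.card (Fin D → Fin q) = q^D := by
    simp [Fintype.card_fun]
  have hc2 : Fintype.card {y : Fin L → Fin q // y ≠ fun s : Fin L => U ((s:ℕ):ℤ)} = q^L - 1 := by
    rw [Fintype.card_subtype_compl, Fintype.card_subtype_eq]
    simp [Fintype.card_fun]
  have hc3 : Fintype.card (Fin k → {y : Fin L → Fin q // y ≠ fun s : Fin L => U ((s:ℕ):ℤ)})
      = (q^L - 1)^k := by
    rw [Fintype.card_fun, hc2, Fintype.card_fin]
  rw [hc1, hc3] at hcard
  -- final arithmetic: q^D ≤ a^k is impossible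
  have hA1 : a + 1 = q^L := by omega
  have hps : a^(k-1) * a = a^k := by
    rw [← pow_succ]
    congr 1
    omega
  have hkk : k * a^(k-1) = q^(2*l) * a^k := by
    calc k * a^(k-1) = q^(2*l) * (a^(k-1) * a) := by rw [hkdef]; ring
      _ = q^(2*l) * a^k := by rw [hps]
  have h1 : a^k + q^(2*l) * a^k ≤ (a+1)^k := by
    have := pow_aux a k
    rw [hkk] at this
    exact this
  have h2 : (a+1)^k = q^D * q^(2*l) := by
    rw [hA1, ← pow_mul]
    rw [← pow_add]
    congr 1
    rw [mul_comm]
    omega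
  have hak1 : 1 ≤ a^k := Nat.one_le_pow _ _ (by omega)
  have hcard' : q^D ≤ a^k := by rw [hadef]; exact hcard
  have h3 : q^(2*l) * q^D ≤ q^(2*l) * a^k := Nat.mul_le_mul_left _ hcard'
  have hfinal : q^D * q^(2*l) < q^D * q^(2*l) := by
    calc q^D * q^(2*l) = q^(2*l) * q^D := by ring
      _ ≤ q^(2*l) * a^k := h3
      _ < a^k + q^(2*l) * a^k := by linarith
      _ ≤ (a+1)^k := h1
      _ = q^D * q^(2*l) := h2
  exact absurd hfinal (lt_irrefl _)


lemma dense_CF (q : ℕ) [NeZero q] : Dense (CF q) := by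
  intro c
  rw [mem_closure_iff_nhds]
  intro t ht
  rw [nhds_pi, Filter.mem_pi] at ht
  obtain ⟨I, hIf, s, hs, hsub⟩ := ht
  refine ⟨fun i => if i ∈ I then c i else 0, hsub ?_, ?_⟩
  · intro i hi
    simp only [hi, if_pos]
    exact mem_of_mem_nhds (hs i)
  · apply hIf.subset
    intro i hi
    by_contra hmem
    exact hi (by simp [hmem])

lemma glob_continuous (q l : ℕ) [NeZero q] (f : (Fin (2*l+1) → Fin q) → Fin q) :
    Continuous (glob q l f) := by
  apply continuous_pi
  intro i
  have hg : Continuous (fun c : ℤ → Fin q => (fun j : Fin (2*l+1) => c (i + (j:ℤ) - l))) :=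
    continuous_pi fun j => continuous_apply _
  exact (continuous_of_discreteTopology (f := f)).comp hg

lemma surj_of_bijOn (q l : ℕ) [NeZero q] (f : (Fin (2*l+1) → Fin q) → Fin q)
    (h : Set.BijOn (glob q l f) (CF q) (CF q)) :
    Function.Surjective (glob q l f) := by
  have hclosed : IsClosed (Set.range (glob q l f)) :=
    (isCompact_range (glob_continuous q l f)).isClosed
  have hsub : CF q ⊆ Set.range (glob q l f) := by
    intro e he
    obtain ⟨x, -, hx⟩ := h.surjOn he
    exact ⟨x, hx⟩
  have hdense : Dense (Set.range (glob q l f)) := (dense_CF q).mono hsub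
  intro y
  have : y ∈ closure (Set.range (glob q l f)) := hdense y
  rwa [hclosed.closure_eq] at this


theorem surjective_iff_bijOn_finite (q l : ℕ) [NeZero q] (hq : 2 ≤ q)
    (f : (Fin (2*l+1) → Fin q) → Fin q) (hF : FNC q l f) :
    Function.Surjective (glob q l f) ↔ Set.BijOn (glob q l f) (CF q) (CF q) := by
  constructor
  · intro hsurj
    refine ⟨mapsTo_CF q l f hF.1, injOn_CF q l hq f hsurj, ?_⟩
    intro e he
    obtain ⟨c, hc⟩ := hsurj e
    exact ⟨c, preimage_finite q l f hF hc he, hc⟩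
  · exact surj_of_bijOn q l f
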